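/- If the system is globally hypoelliptic at the Fourier coefficient level, then for every ε > 0 there exists C > 0 such that ‖σ(τ,j)‖ ≥ C·exp(−ε·w(τ,j)) for all (τ,j) ∈ ℤ^m×ℕ with ‖σ(τ,j)‖ ≠ 0. -/

import Mathlib

open Real

/-- Euclidean norm of an integer vector `τ ∈ ℤ^m`. -/
noncomputable def eNormZ {m : ℕ} (τ : Fin m → ℤ) : ℝ :=
  Real.sqrt (∑ i, ((τ i : ℝ)) ^ 2)

/-- The weight `w(τ,j) = ‖τ‖^(1/σ) + j^(1/(2nμ))`. -/
noncomputable def wgt (m n : ℕ) (σ μ : ℝ) (τ : Fin m → ℤ) (j : ℕ) : ℝ :=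
  eNormZ τ ^ (1 / σ) + (j : ℝ) ^ (1 / (2 * n * μ))

/-- GS-decay: `|a(τ,j)| ≤ C exp(-ε w(τ,j))` for some `C, ε > 0`. -/
def GSDecay (m n : ℕ) (σ μ : ℝ) (a : (Fin m → ℤ) → ℕ → ℂ) : Prop :=
  ∃ C > 0, ∃ ε > 0, ∀ τ j, ‖a τ j‖ ≤ C * Real.exp (-ε * wgt m n σ μ τ j)

/-- GS-growth: for all `ε > 0` there is `C > 0` with `|a(τ,j)| ≤ C exp(ε w(τ,j))`. -/
def GSGrowth (m n : ℕ) (σ μ : ℝ) (a : (Fin m → ℤ) → ℕ → ℂ) : Prop :=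
  ∀ ε > 0, ∃ C > 0, ∀ τ j, ‖a τ j‖ ≤ C * Real.exp (ε * wgt m n σ μ τ j)

/-- Symbol of the operator `L_r = Q_r(D_t) + d_r P(x,D_x)`: `σ_r(τ,j) = Q_r(τ) + d_r λ_j`. -/
noncomputable def symb {m ℓ : ℕ} (Q : Fin ℓ → MvPolynomial (Fin m) ℂ)
    (d : Fin ℓ → ℂ) (lam : ℕ → ℝ) (r : Fin ℓ) (τ : Fin m → ℤ) (j : ℕ) : ℂ :=
  MvPolynomial.eval (fun i => ((τ i : ℂ))) (Q r) + d r * (lam j : ℂ)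

/-- `‖σ(τ,j)‖ = max_{1 ≤ r ≤ ℓ} |σ_r(τ,j)|`. -/
noncomputable def symbNorm {m ℓ : ℕ} (Q : Fin ℓ → MvPolynomial (Fin m) ℂ)
    (d : Fin ℓ → ℂ) (lam : ℕ → ℝ) (τ : Fin m → ℤ) (j : ℕ) : ℝ :=
  ⨆ r : Fin ℓ, ‖symb Q d lam r τ j‖

/-- The Diophantine condition (DC). -/
def DioCond (m n ℓ : ℕ) (σ μ : ℝ) (Q : Fin ℓ → MvPolynomial (Fin m) ℂ)
    (d : Fin ℓ → ℂ) (lam : ℕ → ℝ) : Prop :=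
  ∀ ε > 0, ∃ C > 0, ∀ τ j, symbNorm Q d lam τ j ≠ 0 →
    symbNorm Q d lam τ j ≥ C * Real.exp (-ε * wgt m n σ μ τ j)

/-- Global hypoellipticity at the Fourier coefficient level. -/
def GloballyHypoelliptic (m n ℓ : ℕ) (σ μ : ℝ) (Q : Fin ℓ → MvPolynomial (Fin m) ℂ)
    (d : Fin ℓ → ℂ) (lam : ℕ → ℝ) : Prop :=
  ∀ u : (Fin m → ℤ) → ℕ → ℂ, GSGrowth m n σ μ u →
    (∀ r : Fin ℓ, GSDecay m n σ μ (fun τ j => symb Q d lam r τ j * u τ j)) →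
    GSDecay m n σ μ u

/-- Admissible families (compatibility conditions). -/
def Admissible {m ℓ : ℕ} (Q : Fin ℓ → MvPolynomial (Fin m) ℂ) (d : Fin ℓ → ℂ)
    (lam : ℕ → ℝ) (f : Fin ℓ → (Fin m → ℤ) → ℕ → ℂ) : Prop :=
  (∀ r s τ j, symb Q d lam r τ j * f s τ j = symb Q d lam s τ j * f r τ j) ∧
  (∀ r τ j, symb Q d lam r τ j = 0 → f r τ j = 0)

/-- Global solvability at the Fourier coefficient level. -/
def GloballySolvable (m n ℓ : ℕ) (σ μ : ℝ) (Q : Fin ℓ → MvPolynomial (Fin m) ℂ)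
    (d : Fin ℓ → ℂ) (lam : ℕ → ℝ) : Prop :=
  ∀ f : Fin ℓ → (Fin m → ℤ) → ℕ → ℂ, Admissible Q d lam f →
    (∀ r, GSGrowth m n σ μ (f r)) →
    ∃ u : (Fin m → ℤ) → ℕ → ℂ, GSGrowth m n σ μ u ∧
      ∀ r τ j, symb Q d lam r τ j * u τ j = f r τ j

/-! Fix `ε > 0` and let `S` be the set of points where `0 < ‖σ(τ,j)‖ ≤ exp(-ε w(τ,j))`. Off `S`
the bound holds with `C = 1`, and on `S` (where `exp(-ε w) ≤ 1`) with `C = min_S ‖σ‖` as soon as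
`S` is finite. The indicator `1_S` is bounded, hence has GS-growth, and `|σ_r · 1_S| ≤ exp(-ε w)`,
so global hypoellipticity gives GS-decay of `1_S`. This bounds `w` on `S`, and the sublevel sets of
`w` are finite. -/

lemma Set.Finite.exists_pos_le_of_pos {α : Type*} {s : Set α} (hs : s.Finite) {f : α → ℝ}
    (hf : ∀ a ∈ s, 0 < f a) : ∃ c > 0, ∀ a ∈ s, c ≤ f a := by
  rcases s.eq_empty_or_nonempty with rfl | hne
  · exact ⟨1, one_pos, by simp⟩
  · obtain ⟨a, ha, hmin⟩ := Set.exists_min_image s f hs hne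
    exact ⟨f a, hf a ha, hmin⟩

lemma eNormZ_nonneg {m : ℕ} (τ : Fin m → ℤ) : 0 ≤ eNormZ τ := Real.sqrt_nonneg _

lemma abs_le_eNormZ {m : ℕ} (τ : Fin m → ℤ) (i : Fin m) : |(τ i : ℝ)| ≤ eNormZ τ := by
  rw [← Real.sqrt_sq_eq_abs]
  exact Real.sqrt_le_sqrt (Finset.single_le_sum (fun i _ => sq_nonneg (τ i : ℝ))
    (Finset.mem_univ i))

lemma finite_setOf_eNormZ_le (m : ℕ) (R : ℝ) : {τ : Fin m → ℤ | eNormZ τ ≤ R}.Finite := by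
  refine (Set.Finite.pi (fun _ : Fin m => Set.finite_Icc (-⌈R⌉) ⌈R⌉)).subset fun τ hτ i _ => ?_
  have hi : |(τ i : ℝ)| ≤ ⌈R⌉ := (abs_le_eNormZ τ i).trans (hτ.trans (Int.le_ceil R))
  rw [abs_le] at hi
  exact ⟨by exact_mod_cast hi.1, by exact_mod_cast hi.2⟩

lemma finite_setOf_natCast_le (R : ℝ) : {j : ℕ | (j : ℝ) ≤ R}.Finite :=
  (Set.finite_Iic ⌈R⌉₊).subset fun _ hj => Nat.cast_le.mp (hj.trans (Nat.le_ceil R))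

lemma rpow_le_of_rpow_inv_le {x W e : ℝ} (hx : 0 ≤ x) (he : 0 < e) (h : x ^ (1 / e) ≤ W) :
    x ≤ max W 0 ^ e := by
  rw [← Real.rpow_inv_le_iff_of_pos hx (le_max_right W 0) he, ← one_div]
  exact h.trans (le_max_left W 0)

section Weight

variable {m n : ℕ} {σ μ : ℝ}

lemma wgt_nonneg (τ : Fin m → ℤ) (j : ℕ) : 0 ≤ wgt m n σ μ τ j :=
  add_nonneg (Real.rpow_nonneg (eNormZ_nonneg τ) _) (Real.rpow_nonneg (Nat.cast_nonneg j) _)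

lemma finite_setOf_wgt_le (hσ : 0 < σ) (hnμ : 0 < 2 * n * μ) (W : ℝ) :
    {p : (Fin m → ℤ) × ℕ | wgt m n σ μ p.1 p.2 ≤ W}.Finite := by
  refine ((finite_setOf_eNormZ_le m (max W 0 ^ σ)).prod
    (finite_setOf_natCast_le (max W 0 ^ (2 * n * μ)))).subset fun ⟨τ, j⟩ hp => ?_
  have hτ := Real.rpow_nonneg (eNormZ_nonneg τ) (1 / σ)
  have hj := Real.rpow_nonneg (Nat.cast_nonneg (α := ℝ) j) (1 / (2 * n * μ))
  simp only [Set.mem_ofPred_eq, wgt] at hp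
  exact ⟨rpow_le_of_rpow_inv_le (eNormZ_nonneg τ) hσ (by linarith),
    rpow_le_of_rpow_inv_le (Nat.cast_nonneg j) hnμ (by linarith)⟩

lemma gsGrowth_of_norm_le {a : (Fin m → ℤ) → ℕ → ℂ} {M : ℝ} (hM : 0 < M)
    (ha : ∀ τ j, ‖a τ j‖ ≤ M) : GSGrowth m n σ μ a := fun _ hε =>
  ⟨M, hM, fun τ j => (ha τ j).trans
    (le_mul_of_one_le_right hM.le (Real.one_le_exp (mul_nonneg hε.le (wgt_nonneg τ j))))⟩

lemma GSDecay.finite_setOf_le_norm {a : (Fin m → ℤ) → ℕ → ℂ} (ha : GSDecay m n σ μ a)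
    (hσ : 0 < σ) (hnμ : 0 < 2 * n * μ) {c : ℝ} (hc : 0 < c) :
    {p : (Fin m → ℤ) × ℕ | c ≤ ‖a p.1 p.2‖}.Finite := by
  obtain ⟨C, hC, δ, hδ, hbound⟩ := ha
  refine (finite_setOf_wgt_le hσ hnμ (Real.log (C / c) / δ)).subset fun ⟨τ, j⟩ hp => ?_
  have hexp : c ≤ C * Real.exp (-δ * wgt m n σ μ τ j) := le_trans hp (hbound τ j)
  have hlog := Real.log_le_log hc hexp
  rw [Real.log_mul hC.ne' (Real.exp_pos _).ne', Real.log_exp] at hlog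
  rw [Set.mem_ofPred_eq, le_div_iff₀ hδ, Real.log_div hC.ne' hc.ne']
  linarith

end Weight

def smallSymbolSet {m ℓ : ℕ} (Q : Fin ℓ → MvPolynomial (Fin m) ℂ) (d : Fin ℓ → ℂ)
    (lam : ℕ → ℝ) (n : ℕ) (σ μ ε : ℝ) : Set ((Fin m → ℤ) × ℕ) :=
  {p | symbNorm Q d lam p.1 p.2 ≠ 0 ∧
    symbNorm Q d lam p.1 p.2 ≤ Real.exp (-ε * wgt m n σ μ p.1 p.2)}

section Symbol

variable {m n ℓ : ℕ} {σ μ : ℝ} (Q : Fin ℓ → MvPolynomial (Fin m) ℂ) (d : Fin ℓ → ℂ) (lam : ℕ → ℝ)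

lemma symbNorm_nonneg (τ : Fin m → ℤ) (j : ℕ) : 0 ≤ symbNorm Q d lam τ j :=
  Real.iSup_nonneg fun _ => norm_nonneg _

lemma norm_symb_le_symbNorm (r : Fin ℓ) (τ : Fin m → ℤ) (j : ℕ) :
    ‖symb Q d lam r τ j‖ ≤ symbNorm Q d lam τ j :=
  le_ciSup (f := fun r => ‖symb Q d lam r τ j‖) (Set.finite_range _).bddAbove r

lemma GloballyHypoelliptic.finite_smallSymbolSet (hGH : GloballyHypoelliptic m n ℓ σ μ Q d lam)
    (hσ : 0 < σ) (hnμ : 0 < 2 * n * μ) {ε : ℝ} (hε : 0 < ε) :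
    (smallSymbolSet Q d lam n σ μ ε).Finite := by
  set S := smallSymbolSet Q d lam n σ μ ε
  set u : (Fin m → ℤ) → ℕ → ℂ := fun τ j => S.indicator 1 (τ, j)
  have hu_le (τ j) : ‖u τ j‖ ≤ 1 := by
    by_cases h : (τ, j) ∈ S <;> simp [u, h]
  have hσu_le (r τ j) : ‖symb Q d lam r τ j * u τ j‖ ≤ Real.exp (-ε * wgt m n σ μ τ j) := by
    by_cases h : (τ, j) ∈ S
    · simpa [u, h] using (norm_symb_le_symbNorm Q d lam r τ j).trans h.2
    · simp [u, h, Real.exp_nonneg]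
  have hdecay := hGH u (gsGrowth_of_norm_le one_pos hu_le)
    fun r => ⟨1, one_pos, ε, hε, fun τ j => by simpa using hσu_le r τ j⟩
  refine (hdecay.finite_setOf_le_norm hσ hnμ one_pos).subset fun p hp => ?_
  simp [u, hp]

lemma exists_pos_mul_exp_le_symbNorm_of_finite {ε : ℝ} (hε : 0 < ε)
    (hS : (smallSymbolSet Q d lam n σ μ ε).Finite) :
    ∃ C > 0, ∀ τ j, symbNorm Q d lam τ j ≠ 0 →
      C * Real.exp (-ε * wgt m n σ μ τ j) ≤ symbNorm Q d lam τ j := by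
  obtain ⟨c, hc, hcS⟩ := hS.exists_pos_le_of_pos fun p hp =>
    (symbNorm_nonneg Q d lam p.1 p.2).lt_of_ne' hp.1
  refine ⟨min c 1, lt_min hc one_pos, fun τ j hne => ?_⟩
  have hexp_le : Real.exp (-ε * wgt m n σ μ τ j) ≤ 1 := by
    rw [Real.exp_le_one_iff, neg_mul, neg_nonpos]
    exact mul_nonneg hε.le (wgt_nonneg τ j)
  by_cases h : (τ, j) ∈ smallSymbolSet Q d lam n σ μ ε
  · exact (mul_le_of_le_one_right (lt_min hc one_pos).le hexp_le).trans
      ((min_le_left c 1).trans (hcS (τ, j) h))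
  · have hlt : Real.exp (-ε * wgt m n σ μ τ j) < symbNorm Q d lam τ j := by
      simpa [smallSymbolSet, hne] using h
    calc min c 1 * Real.exp (-ε * wgt m n σ μ τ j) ≤ Real.exp (-ε * wgt m n σ μ τ j) :=
          mul_le_of_le_one_left (Real.exp_nonneg _) (min_le_right c 1)
      _ ≤ symbNorm Q d lam τ j := hlt.le

end Symbol

theorem statement4_general (m n ℓ : ℕ) (hn : 1 ≤ n)
    (σ μ : ℝ) (hσ : 1 ≤ σ) (hμ : 1 / 2 ≤ μ)
    (Q : Fin ℓ → MvPolynomial (Fin m) ℂ) (d : Fin ℓ → ℂ) (lam : ℕ → ℝ)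
    (hGH : GloballyHypoelliptic m n ℓ σ μ Q d lam) :
    ∀ ε > 0, ∃ C > 0, ∀ τ j, symbNorm Q d lam τ j ≠ 0 →
      symbNorm Q d lam τ j ≥ C * Real.exp (-ε * wgt m n σ μ τ j) := by
  intro ε hε
  have hnμ : 0 < 2 * (n : ℝ) * μ := by
    have : (1 : ℝ) ≤ n := by exact_mod_cast hn
    positivity
  exact exists_pos_mul_exp_le_symbNorm_of_finite Q d lam hε
    (hGH.finite_smallSymbolSet Q d lam (by linarith) hnμ hε)

/-- global hypoellipticity implies the Diophantine condition (DC). -/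
theorem statement4 (m n ℓ : ℕ) (hm : 1 ≤ m) (hn : 1 ≤ n) (hℓ : 1 ≤ ℓ)
    (σ μ : ℝ) (hσ : 1 ≤ σ) (hμ : 1 / 2 ≤ μ)
    (Q : Fin ℓ → MvPolynomial (Fin m) ℂ) (d : Fin ℓ → ℂ) (lam : ℕ → ℝ)
    (hGH : GloballyHypoelliptic m n ℓ σ μ Q d lam) :
    ∀ ε > 0, ∃ C > 0, ∀ τ j, symbNorm Q d lam τ j ≠ 0 →
      symbNorm Q d lam τ j ≥ C * Real.exp (-ε * wgt m n σ μ τ j) :=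
  statement4_general m n ℓ hn σ μ hσ hμ Q d lam hGH
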